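/- Let (C, ⊗, 1) be a monoidal category, α > 0, and let K_I be a monoidal presheaf on [0,α] with values in C. Given two monoidal presheaves 𝒦_1, 𝒦_2 on ℝ_{≥0} with values in C and isomorphisms of monoidal presheaves θ : 𝒦_1|_{[0,α]} ≅ K_I and θ' : 𝒦_2|_{[0,α]} ≅ K_I, there exists a unique isomorphism of monoidal presheaves λ : 𝒦_1 ≅ 𝒦_2 such that λ|_{[0,α]} = θ'^{-1} ∘ θ. -/

import Mathlib

/-!
Restriction from monoidal presheaves on `ℝ≥0` to monoidal presheaves on `[0, α]` is fully
faithful; the unique `λ` is the preimage of `θ'⁻¹ ∘ θ`. Because `φ₂(α, a - α)` is invertible, a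
morphism `λ` on `[0, α]` extends in at most one way, by `λ_a = φ₂ ∘ (λ_α ⊗ λ_{a-α}) ∘ φ₂⁻¹` for
`a > α`. The associativity constraint shows that once `λ` is monoidal at `(a, b)` and `(b, c)`, it
is monoidal at `(a, b + c)` if and only if it is at `(a + b, c)`; an induction on `a + b` in steps
of `α` thereby reduces monoidality of the extension at every pair to the pairs `(α, c)`, where it
holds by construction, and to the pairs with `a + b ≤ α`. Naturality follows in the same way from
the compatibility of `φ₂` with restrictions.
-/

open CategoryTheory MonoidalCategory

universe v u

/-- Congruence for a family of objects indexed by points of a subset of `ℝ`. -/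
theorem objCongr {C : Type u} [Category.{v} C] {I : Set ℝ} (f : ∀ a : ℝ, a ∈ I → C)
    {a b : ℝ} (h : a = b) (ha : a ∈ I) (hb : b ∈ I) : f a ha = f b hb := by
  subst h; rfl

/-- A monoidal presheaf on a subset `I ⊆ ℝ` (regarded as a poset category, with the
partially defined monoidal structure given by addition) with values in a monoidal
category `C`. -/
structure MonoidalPresheaf (C : Type u) [Category.{v} C] [MonoidalCategory C]
    (I : Set ℝ) where
  /-- the value at `a ∈ I` -/
  obj : ∀ a : ℝ, a ∈ I → C
  /-- the restriction morphisms `ρ_{a,b} : K_b ⟶ K_a` for `a ≤ b` -/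
  res : ∀ (a b : ℝ) (ha : a ∈ I) (hb : b ∈ I), a ≤ b → (obj b hb ⟶ obj a ha)
  res_id : ∀ (a : ℝ) (ha : a ∈ I), res a a ha ha le_rfl = 𝟙 (obj a ha)
  res_comp : ∀ (a b c : ℝ) (ha : a ∈ I) (hb : b ∈ I) (hc : c ∈ I)
      (hab : a ≤ b) (hbc : b ≤ c),
      res b c hb hc hbc ≫ res a b ha hb hab = res a c ha hc (hab.trans hbc)
  /-- `φ0 : 1 ≅ K_0` -/
  unit : ∀ h0 : (0 : ℝ) ∈ I, 𝟙_ C ≅ obj 0 h0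
  /-- `φ2(a,b) : K_a ⊗ K_b ≅ K_{a+b}` -/
  mul : ∀ (a b : ℝ) (ha : a ∈ I) (hb : b ∈ I) (hab : a + b ∈ I),
      obj a ha ⊗ obj b hb ≅ obj (a + b) hab
  /-- compatibility of `φ2` with the restriction morphisms -/
  mul_res : ∀ (a b a' b' : ℝ) (ha : a ∈ I) (hb : b ∈ I) (ha' : a' ∈ I) (hb' : b' ∈ I)
      (hab : a + b ∈ I) (hab' : a' + b' ∈ I) (haa' : a ≤ a') (hbb' : b ≤ b'),
      (mul a' b' ha' hb' hab').hom ≫ res (a + b) (a' + b') hab hab' (add_le_add haa' hbb')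
        = (res a a' ha ha' haa' ⊗ₘ res b b' hb hb' hbb') ≫ (mul a b ha hb hab).hom
  /-- associativity of `φ2` -/
  assoc : ∀ (a b c : ℝ) (ha : a ∈ I) (hb : b ∈ I) (hc : c ∈ I)
      (hab : a + b ∈ I) (hbc : b + c ∈ I) (habc : a + b + c ∈ I) (habc' : a + (b + c) ∈ I),
      (α_ (obj a ha) (obj b hb) (obj c hc)).hom ≫ (𝟙 (obj a ha) ⊗ₘ (mul b c hb hc hbc).hom)
          ≫ (mul a (b + c) ha hbc habc').hom
        = ((mul a b ha hb hab).hom ⊗ₘ 𝟙 (obj c hc)) ≫ (mul (a + b) c hab hc habc).hom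
          ≫ eqToHom (objCongr obj (add_assoc a b c) habc habc')
  /-- left unitality -/
  unit_mul : ∀ (a : ℝ) (ha : a ∈ I) (h0 : (0 : ℝ) ∈ I) (h0a : 0 + a ∈ I),
      ((unit h0).hom ⊗ₘ 𝟙 (obj a ha)) ≫ (mul 0 a h0 ha h0a).hom
        = (λ_ (obj a ha)).hom ≫ eqToHom (objCongr obj (zero_add a).symm ha h0a)
  /-- right unitality -/
  mul_unit : ∀ (a : ℝ) (ha : a ∈ I) (h0 : (0 : ℝ) ∈ I) (ha0 : a + 0 ∈ I),
      (𝟙 (obj a ha) ⊗ₘ (unit h0).hom) ≫ (mul a 0 ha h0 ha0).hom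
        = (ρ_ (obj a ha)).hom ≫ eqToHom (objCongr obj (add_zero a).symm ha ha0)

namespace MonoidalPresheaf

variable {C : Type u} [Category.{v} C] [MonoidalCategory C] {I : Set ℝ}

/-- A morphism of monoidal presheaves. -/
@[ext]
structure Hom (K K' : MonoidalPresheaf C I) where
  app : ∀ (a : ℝ) (ha : a ∈ I), K.obj a ha ⟶ K'.obj a ha
  naturality : ∀ (a b : ℝ) (ha : a ∈ I) (hb : b ∈ I) (hab : a ≤ b),
      K.res a b ha hb hab ≫ app a ha = app b hb ≫ K'.res a b ha hb hab
  monoidal : ∀ (a b : ℝ) (ha : a ∈ I) (hb : b ∈ I) (hab : a + b ∈ I),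
      (K.mul a b ha hb hab).hom ≫ app (a + b) hab
        = (app a ha ⊗ₘ app b hb) ≫ (K'.mul a b ha hb hab).hom

instance : Category (MonoidalPresheaf C I) where
  Hom K K' := Hom K K'
  id K :=
    { app := fun a ha => 𝟙 (K.obj a ha)
      naturality := by intros; simp
      monoidal := by intros; simp }
  comp {K K' K''} f g :=
    { app := fun a ha => f.app a ha ≫ g.app a ha
      naturality := by
        intros a b ha hb hab
        rw [← Category.assoc, f.naturality, Category.assoc, g.naturality, Category.assoc]
      monoidal := by
        intros a b ha hb hab
        rw [← Category.assoc, f.monoidal, Category.assoc, g.monoidal, ← Category.assoc,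
          tensorHom_comp_tensorHom] }
  id_comp f := by apply Hom.ext; funext a ha; simp
  comp_id f := by apply Hom.ext; funext a ha; simp
  assoc f g h := by apply Hom.ext; funext a ha; simp

end MonoidalPresheaf

/-- Restriction of a monoidal presheaf along an inclusion of subsets of `ℝ`. -/
def MonoidalPresheaf.restrictObj {C : Type u} [Category.{v} C] [MonoidalCategory C]
    {I J : Set ℝ} (hIJ : I ⊆ J) (K : MonoidalPresheaf C J) : MonoidalPresheaf C I where
  obj a ha := K.obj a (hIJ ha)
  res a b ha hb hab := K.res a b (hIJ ha) (hIJ hb) hab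
  res_id a ha := K.res_id a (hIJ ha)
  res_comp a b c ha hb hc hab hbc := K.res_comp a b c _ _ _ hab hbc
  unit h0 := K.unit (hIJ h0)
  mul a b ha hb hab := K.mul a b (hIJ ha) (hIJ hb) (hIJ hab)
  mul_res a b a' b' ha hb ha' hb' hab hab' haa' hbb' :=
    K.mul_res a b a' b' _ _ _ _ _ _ haa' hbb'
  assoc a b c ha hb hc hab hbc habc habc' := K.assoc a b c _ _ _ _ _ _ _
  unit_mul a ha h0 h0a := K.unit_mul a _ _ _
  mul_unit a ha h0 ha0 := K.mul_unit a _ _ _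

/-- The restriction functor `Fun^⊗(J^op, C) ⥤ Fun^⊗(I^op, C)` induced by an
inclusion `I ⊆ J` of subsets of `ℝ`. -/
def MonoidalPresheaf.restrictFunctor (C : Type u) [Category.{v} C] [MonoidalCategory C]
    {I J : Set ℝ} (hIJ : I ⊆ J) :
    MonoidalPresheaf C J ⥤ MonoidalPresheaf C I where
  obj K := MonoidalPresheaf.restrictObj hIJ K
  map {K K'} f :=
    { app := fun a ha => f.app a (hIJ ha)
      naturality := fun a b ha hb hab => f.naturality a b _ _ hab
      monoidal := fun a b ha hb hab => f.monoidal a b _ _ _ }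
  map_id K := rfl
  map_comp f g := rfl

lemma forall_nonneg_of_add_induction {α : ℝ} (hα : 0 < α) {P : ℝ → Prop}
    (base : ∀ a, 0 ≤ a → a ≤ α → P a) (step : ∀ a, 0 ≤ a → P a → P (α + a)) :
    ∀ a, 0 ≤ a → P a := by
  intro a ha
  obtain ⟨n, hn⟩ : ∃ n : ℕ, a ≤ n * α := by
    obtain ⟨n, hn⟩ := exists_nat_ge (a / α)
    exact ⟨n, (div_le_iff₀ hα).1 hn⟩
  induction n generalizing a with
  | zero => exact base a ha (by simp only [Nat.cast_zero, zero_mul] at hn; linarith)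
  | succ n ih =>
    rcases le_or_gt a α with h | h
    · exact base a ha h
    · have hn' : a - α ≤ n * α := by push_cast at hn; linarith
      simpa using step (a - α) (by linarith) (ih (a - α) (by linarith) hn')

namespace MonoidalPresheaf

variable {C : Type u} [Category.{v} C] [MonoidalCategory C]

section Family

variable {I : Set ℝ} {K K' : MonoidalPresheaf C I}

/- The membership proofs are quantified over, so that these predicates depend only on the real
indices and can be rewritten along equations between them. -/
def IsMonoidalAt (f : ∀ a ha, K.obj a ha ⟶ K'.obj a ha) (a b : ℝ) : Prop :=
  ∀ ha hb hab, (K.mul a b ha hb hab).hom ≫ f (a + b) hab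
    = (f a ha ⊗ₘ f b hb) ≫ (K'.mul a b ha hb hab).hom

def IsNaturalAt (f : ∀ a ha, K.obj a ha ⟶ K'.obj a ha) (a b : ℝ) : Prop :=
  ∀ ha hb (hab : a ≤ b), K.res a b ha hb hab ≫ f a ha = f b hb ≫ K'.res a b ha hb hab

variable {f : ∀ a ha, K.obj a ha ⟶ K'.obj a ha}

lemma eqToHom_objCongr_naturality {x y : ℝ} (h : x = y) (hx : x ∈ I) (hy : y ∈ I) :
    eqToHom (objCongr K.obj h hx hy) ≫ f y hy = f x hx ≫ eqToHom (objCongr K'.obj h hx hy) := by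
  subst h; simp

lemma isMonoidalAt_iff {a b : ℝ} (ha : a ∈ I) (hb : b ∈ I) (hab : a + b ∈ I) :
    IsMonoidalAt f a b ↔ (K.mul a b ha hb hab).hom ≫ f (a + b) hab
      = (f a ha ⊗ₘ f b hb) ≫ (K'.mul a b ha hb hab).hom :=
  ⟨fun h => h ha hb hab, fun h _ _ _ => h⟩

lemma isMonoidalAt_add_iff {a b c : ℝ} (h₁ : IsMonoidalAt f a b) (h₂ : IsMonoidalAt f b c)
    (ha : a ∈ I) (hb : b ∈ I) (hc : c ∈ I) (hab : a + b ∈ I) (hbc : b + c ∈ I)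
    (habc : a + b + c ∈ I) :
    IsMonoidalAt f a (b + c) ↔ IsMonoidalAt f (a + b) c := by
  have habc' : a + (b + c) ∈ I := add_assoc a b c ▸ habc
  rw [isMonoidalAt_iff ha hbc habc', isMonoidalAt_iff hab hc habc,
    ← cancel_epi ((α_ _ _ _).hom ≫ (_ ◁ (K.mul b c hb hc hbc).hom)),
    ← cancel_epi ((K.mul a b ha hb hab).hom ▷ K.obj c hc),
    ← cancel_mono (eqToHom (objCongr K'.obj (add_assoc a b c) habc habc'))]
  have hK := K.assoc a b c ha hb hc hab hbc habc habc'
  have hK' := K'.assoc a b c ha hb hc hab hbc habc habc'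
  simp only [id_tensorHom, tensorHom_id] at hK hK'
  simp only [Category.assoc] at hK hK' ⊢
  rw [reassoc_of% hK, eqToHom_objCongr_naturality (add_assoc a b c),
    whiskerLeft_comp_tensorHom_assoc, h₂ hb hc hbc, ← tensorHom_comp_whiskerLeft_assoc,
    ← associator_naturality_assoc, hK', tensorHom_comp_whiskerRight_assoc,
    ← h₁ ha hb hab, ← whiskerRight_comp_tensorHom_assoc]

lemma isNaturalAt_add {x c b : ℝ} (hxc : IsMonoidalAt f x c) (hxb : IsMonoidalAt f x b)
    (hcb : IsNaturalAt f c b) (hx : x ∈ I) (hc : c ∈ I) (hb : b ∈ I) (hxc' : x + c ∈ I)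
    (hxb' : x + b ∈ I) : IsNaturalAt f (x + c) (x + b) := by
  intro _ _ hle
  have hle' : c ≤ b := by linarith
  have hK := K.mul_res x c x b hx hc hx hb hxc' hxb' le_rfl hle'
  have hK' := K'.mul_res x c x b hx hc hx hb hxc' hxb' le_rfl hle'
  simp only [res_id, id_tensorHom] at hK hK'
  rw [← cancel_epi (K.mul x b hx hb hxb').hom, reassoc_of% hK, hxc hx hc hxc',
    whiskerLeft_comp_tensorHom_assoc, hcb hc hb hle', ← tensorHom_comp_whiskerLeft_assoc, ← hK',
    reassoc_of% (hxb hx hb hxb')]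

lemma IsNaturalAt.trans {a c b : ℝ} (h₁ : IsNaturalAt f a c) (h₂ : IsNaturalAt f c b)
    (hc : c ∈ I) (hac : a ≤ c) (hcb : c ≤ b) : IsNaturalAt f a b := by
  intro ha hb _
  rw [← K.res_comp a c b ha hc hb hac hcb, ← K'.res_comp a c b ha hc hb hac hcb,
    Category.assoc, h₁ ha hc hac, reassoc_of% (h₂ hc hb hcb)]

lemma IsMonoidalAt.eq_at_add {g : ∀ a ha, K.obj a ha ⟶ K'.obj a ha} {a b : ℝ}
    (hf : IsMonoidalAt f a b) (hg : IsMonoidalAt g a b) (ha : a ∈ I) (hb : b ∈ I)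
    (hab : a + b ∈ I) (hfga : f a ha = g a ha) (hfgb : f b hb = g b hb) :
    f (a + b) hab = g (a + b) hab := by
  rw [← cancel_epi (K.mul a b ha hb hab).hom, hf ha hb hab, hg ha hb hab, hfga, hfgb]

end Family

section Nonneg

variable {K K' : MonoidalPresheaf C (Set.Ici 0)} {f : ∀ a ha, K.obj a ha ⟶ K'.obj a ha}

lemma isMonoidalAt_add_iff_of_nonneg {a b c : ℝ} (h₁ : IsMonoidalAt f a b)
    (h₂ : IsMonoidalAt f b c) (ha : 0 ≤ a) (hb : 0 ≤ b) (hc : 0 ≤ c) :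
    IsMonoidalAt f a (b + c) ↔ IsMonoidalAt f (a + b) c :=
  isMonoidalAt_add_iff h₁ h₂ ha hb hc (add_nonneg ha hb) (add_nonneg hb hc)
    (add_nonneg (add_nonneg ha hb) hc)

lemma isNaturalAt_add_of_nonneg {x c b : ℝ} (hxc : IsMonoidalAt f x c) (hxb : IsMonoidalAt f x b)
    (hcb : IsNaturalAt f c b) (hx : 0 ≤ x) (hc : 0 ≤ c) (hb : 0 ≤ b) :
    IsNaturalAt f (x + c) (x + b) :=
  isNaturalAt_add hxc hxb hcb hx hc hb (add_nonneg hx hc) (add_nonneg hx hb)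

end Nonneg

section Extension

variable {α : ℝ} {K₁ K₂ : MonoidalPresheaf C (Set.Ici 0)}

variable (C) in
abbrev restrictToIcc (α : ℝ) :
    MonoidalPresheaf C (Set.Ici 0) ⥤ MonoidalPresheaf C (Set.Icc 0 α) :=
  restrictFunctor C Set.Icc_subset_Ici_self

lemma hom_ext_of_restrictToIcc (hα : 0 < α) {φ ψ : K₁ ⟶ K₂}
    (h : (restrictToIcc C α).map φ = (restrictToIcc C α).map ψ) : φ = ψ := by
  have hIcc (a : ℝ) (ha : a ∈ Set.Icc 0 α) : φ.app a ha.1 = ψ.app a ha.1 :=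
    congr_fun₂ (congrArg Hom.app h) a ha
  refine Hom.ext (funext₂ fun a ha => ?_)
  refine forall_nonneg_of_add_induction (P := fun a => ∀ ha, φ.app a ha = ψ.app a ha) hα
    (fun a ha haα _ => hIcc a ⟨ha, haα⟩) (fun c hc ih _ => ?_) a ha ha
  exact IsMonoidalAt.eq_at_add (φ.monoidal α c) (ψ.monoidal α c) hα.le hc _
    (hIcc α ⟨hα.le, le_rfl⟩) (ih hc)

noncomputable def extend (hα : 0 < α)
    (f : (restrictToIcc C α).obj K₁ ⟶ (restrictToIcc C α).obj K₂) (a : ℝ) (ha : a ∈ Set.Ici 0) :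
    K₁.obj a ha ⟶ K₂.obj a ha :=
  if h : a ≤ α then f.app a ⟨ha, h⟩
  else
    have hα' : (0 : ℝ) ≤ α := hα.le
    have ha' : (0 : ℝ) ≤ a - α := by linarith
    have hs : α + (a - α) ∈ Set.Ici 0 := by simpa using ha
    eqToHom (objCongr K₁.obj (add_sub_cancel α a).symm ha hs) ≫
      (K₁.mul α (a - α) hα' ha' hs).inv ≫ (f.app α ⟨hα', le_rfl⟩ ⊗ₘ extend hα f (a - α) ha') ≫
      (K₂.mul α (a - α) hα' ha' hs).hom ≫ eqToHom (objCongr K₂.obj (add_sub_cancel α a) hs ha)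
termination_by ⌈a / α⌉₊
decreasing_by
  have : a / α = (a - α) / α + 1 := by field_simp; ring
  rw [this, Nat.ceil_add_one (div_nonneg ha' hα')]
  omega

variable (hα : 0 < α) (f : (restrictToIcc C α).obj K₁ ⟶ (restrictToIcc C α).obj K₂)

lemma extend_of_le {a : ℝ} (ha : a ∈ Set.Ici 0) (h : a ≤ α) :
    extend hα f a ha = f.app a ⟨ha, h⟩ := by
  rw [extend]; exact dif_pos h

lemma extend_of_lt {a : ℝ} (ha : a ∈ Set.Ici 0) (h : α < a) (hα' : α ∈ Set.Ici 0)
    (ha' : a - α ∈ Set.Ici 0) (hs : α + (a - α) ∈ Set.Ici 0) :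
    extend hα f a ha = eqToHom (objCongr K₁.obj (add_sub_cancel α a).symm ha hs) ≫
      (K₁.mul α (a - α) hα' ha' hs).inv ≫ (f.app α ⟨hα', le_rfl⟩ ⊗ₘ extend hα f (a - α) ha') ≫
      (K₂.mul α (a - α) hα' ha' hs).hom ≫ eqToHom (objCongr K₂.obj (add_sub_cancel α a) hs ha) := by
  rw [extend]; exact dif_neg h.not_ge

lemma isMonoidalAt_extend_of_add_le {a b : ℝ} (h : a + b ≤ α) :
    IsMonoidalAt (extend hα f) a b := by
  intro ha hb hab
  have ha' : a ≤ α := by linarith [Set.mem_Ici.1 hb]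
  have hb' : b ≤ α := by linarith [Set.mem_Ici.1 ha]
  rw [extend_of_le hα f ha ha', extend_of_le hα f hb hb', extend_of_le hα f hab h]
  exact f.monoidal a b ⟨ha, ha'⟩ ⟨hb, hb'⟩ ⟨hab, h⟩

lemma isNaturalAt_extend_of_le {a b : ℝ} (h : b ≤ α) : IsNaturalAt (extend hα f) a b := by
  intro ha hb hab
  rw [extend_of_le hα f ha (hab.trans h), extend_of_le hα f hb h]
  exact f.naturality a b ⟨ha, hab.trans h⟩ ⟨hb, h⟩ hab

lemma isMonoidalAt_extend_left {c : ℝ} (hc : 0 ≤ c) : IsMonoidalAt (extend hα f) α c := by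
  rcases hc.eq_or_lt with rfl | hc
  · exact isMonoidalAt_extend_of_add_le hα f (add_zero α).le
  have hsplit : IsMonoidalAt (extend hα f) α (α + c - α) := by
    intro hα' hc' hs
    have ha : α + c ∈ Set.Ici 0 := add_nonneg hα' hc.le
    rw [← cancel_mono (eqToHom (objCongr K₂.obj (add_sub_cancel α (α + c)) hs ha)),
      Category.assoc, Category.assoc, ← eqToHom_objCongr_naturality (add_sub_cancel α (α + c)),
      extend_of_lt hα f ha (by linarith) hα' hc' hs, extend_of_le hα f hα' le_rfl]
    simp only [eqToHom_trans_assoc, eqToHom_refl, Category.id_comp, Iso.hom_inv_id_assoc]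
    rfl
  simpa using hsplit

lemma isMonoidalAt_extend_right {c : ℝ} (hc : 0 ≤ c) : IsMonoidalAt (extend hα f) c α := by
  refine forall_nonneg_of_add_induction (P := fun c => IsMonoidalAt (extend hα f) c α) hα
    (fun c hc hcα => ?_) (fun c hc ih => ?_) c hc
  · have hc' : 0 ≤ α - c := by linarith
    have h := (isMonoidalAt_add_iff_of_nonneg (isMonoidalAt_extend_of_add_le hα f (by linarith))
      (isMonoidalAt_extend_of_add_le hα f (by linarith)) hc hc' hc).2
      (by simpa using isMonoidalAt_extend_left hα f hc)
    simpa using h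
  · exact (isMonoidalAt_add_iff_of_nonneg (isMonoidalAt_extend_left hα f hc) ih hα.le hc hα.le).1
      (isMonoidalAt_extend_left hα f (by positivity))

lemma isMonoidalAt_extend {a b : ℝ} (ha : 0 ≤ a) (hb : 0 ≤ b) :
    IsMonoidalAt (extend hα f) a b := by
  suffices ∀ s, 0 ≤ s → ∀ a b, 0 ≤ a → 0 ≤ b → a + b = s → IsMonoidalAt (extend hα f) a b from
    this (a + b) (add_nonneg ha hb) a b ha hb rfl
  refine forall_nonneg_of_add_induction hα
    (fun s _ hsα a b _ _ hab => isMonoidalAt_extend_of_add_le hα f (hab ▸ hsα))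
    (fun s hs ih a b ha hb hab => ?_)
  rcases le_or_gt α a with hαa | haα
  · obtain ⟨c, rfl⟩ : ∃ c, a = α + c := ⟨a - α, by ring⟩
    have hc : 0 ≤ c := by linarith
    exact (isMonoidalAt_add_iff_of_nonneg (isMonoidalAt_extend_left hα f hc)
      (ih c b hc hb (by linarith)) hα.le hc hb).1 (isMonoidalAt_extend_left hα f (by linarith))
  rcases le_or_gt α b with hαb | hbα
  · obtain ⟨d, rfl⟩ : ∃ d, b = d + α := ⟨b - α, by ring⟩
    have hd : 0 ≤ d := by linarith
    exact (isMonoidalAt_add_iff_of_nonneg (ih a d ha hd (by linarith))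
      (isMonoidalAt_extend_right hα f hd) ha hd hα.le).2
      (isMonoidalAt_extend_right hα f (by linarith))
  · -- here `a, b < α`: split `b = (α - a) + s`, so that `a + (α - a) = α`
    obtain ⟨e, rfl⟩ : ∃ e, b = e + s := ⟨b - s, by ring⟩
    have hae : a + e = α := by linarith
    have h := isMonoidalAt_add_iff_of_nonneg (isMonoidalAt_extend_of_add_le hα f hae.le)
      (isMonoidalAt_extend_of_add_le hα f hbα.le) ha (by linarith) hs
    rw [hae] at h
    exact h.2 (isMonoidalAt_extend_left hα f hs)

lemma isNaturalAt_extend {b : ℝ} (hb : 0 ≤ b) (a : ℝ) : IsNaturalAt (extend hα f) a b := by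
  refine forall_nonneg_of_add_induction (P := fun b => ∀ a, IsNaturalAt (extend hα f) a b) hα
    (fun b _ hbα a => isNaturalAt_extend_of_le hα f hbα) (fun b hb ih a => ?_) b hb a
  intro ha hb' hab
  rcases le_or_gt α a with hαa | haα
  · obtain ⟨c, rfl⟩ : ∃ c, a = α + c := ⟨a - α, by ring⟩
    have hc : 0 ≤ c := by linarith
    exact isNaturalAt_add_of_nonneg (isMonoidalAt_extend_left hα f hc)
      (isMonoidalAt_extend_left hα f hb) (ih c) hα.le hc hb ha hb' hab
  · have hαb : IsNaturalAt (extend hα f) α (α + b) := by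
      simpa using isNaturalAt_add_of_nonneg (isMonoidalAt_extend_left hα f le_rfl)
        (isMonoidalAt_extend_left hα f hb) (ih 0) hα.le le_rfl hb
    exact (isNaturalAt_extend_of_le hα f le_rfl).trans hαb hα.le haα.le (by linarith) ha hb' hab

noncomputable def extendHom : K₁ ⟶ K₂ where
  app := extend hα f
  naturality _ _ ha hb := isNaturalAt_extend hα f hb _ ha hb
  monoidal _ _ ha hb := isMonoidalAt_extend hα f ha hb ha hb

lemma restrictToIcc_map_extendHom : (restrictToIcc C α).map (extendHom hα f) = f :=
  Hom.ext (funext₂ fun _ ha => extend_of_le hα f ha.1 ha.2)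

noncomputable def fullyFaithfulRestrictToIcc : (restrictToIcc C α).FullyFaithful where
  preimage g := extendHom hα g
  map_preimage g := restrictToIcc_map_extendHom hα g
  preimage_map _ := hom_ext_of_restrictToIcc hα (restrictToIcc_map_extendHom hα _)

end Extension
end MonoidalPresheaf

/-- Given a monoidal presheaf `K_I` on `[0,α]`, two monoidal presheaves
`𝒦₁, 𝒦₂` on `ℝ_{≥0}` and isomorphisms `θ : 𝒦₁|_{[0,α]} ≅ K_I`, `θ' : 𝒦₂|_{[0,α]} ≅ K_I`,
there exists a unique isomorphism `λ : 𝒦₁ ≅ 𝒦₂` with `λ|_{[0,α]} = θ'⁻¹ ∘ θ`. -/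
theorem existsUnique_iso_restricting_to (C : Type u) [Category.{v} C] [MonoidalCategory C]
    (α : ℝ) (hα : 0 < α) (KI : MonoidalPresheaf C (Set.Icc (0 : ℝ) α))
    (K₁ K₂ : MonoidalPresheaf C (Set.Ici (0 : ℝ)))
    (θ : (MonoidalPresheaf.restrictFunctor C
        (show Set.Icc (0 : ℝ) α ⊆ Set.Ici 0 from fun _ hx => hx.1)).obj K₁ ≅ KI)
    (θ' : (MonoidalPresheaf.restrictFunctor C
        (show Set.Icc (0 : ℝ) α ⊆ Set.Ici 0 from fun _ hx => hx.1)).obj K₂ ≅ KI) :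
    ∃! lam : K₁ ≅ K₂,
      (MonoidalPresheaf.restrictFunctor C
        (show Set.Icc (0 : ℝ) α ⊆ Set.Ici 0 from fun _ hx => hx.1)).mapIso lam
        = θ ≪≫ θ'.symm :=
  (MonoidalPresheaf.fullyFaithfulRestrictToIcc hα).isoEquiv.bijective.existsUnique _
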